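/- With d, μ, ν, λ and the unit vector ξ fixed, the map D ↦ w_*(ξ; D) is nondecreasing on (0, ∞); moreover, if 0 < D < D' and w_*(ξ; D) > c_K, then w_*(ξ; D) < w_*(ξ; D'). -/

import Mathlib

/-!
Monotonicity is immediate, since `S_{D'}(c) ⊆ S_D(c)` for `D ≤ D'`.

For strictness suppose `w_*(D') ≤ w_*(D) = w > c_K` (then `ξ₁ > 0`, as `w_* ≤ c_K` when
`ξ₁ = 0`), and take `c` slightly above `w` with a point `p = (β, α) ∈ S_{D'}(c) ∩ G(c)`.
Replacing `α` by `max |α| α₀`, where `α₀ = w ξ₁ / (2 max d D')`, keeps `p` in both sets, so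
`p ∈ S_D(c)` with slack `δ = (D' - D) α₀² > 0`, uniformly in `c`. Both defining functions are
concave in `p` (`χ` is concave), and `G(c)` is a disc whose centre has `G`-value
`c² / (4d) > λ`; a small step from `p` towards the centre gives a point with margins in both
inequalities that do not depend on `c`. As `c` enters only through `c ⟨ξ, p⟩`, and
`⟨ξ, p⟩ ≤ c / d` on `G(c)`, one can lower `c` by a fixed `η > 0` and stay admissible for `D`,
whence `w ≤ c - η < w`.
-/

open Real Set

noncomputable section

/-- χ(s) = μ s / (ν + s). -/
def chiF (μ ν s : ℝ) : ℝ := μ * s / (ν + s)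

/-- The set S(c) of points (β, α) with β > -ν/d and
c ξ₁ α + c ξ₂ β − D α² + χ(dβ) ≥ 0. -/
def Sset (d D μ ν ξ1 ξ2 c : ℝ) : Set (ℝ × ℝ) :=
  {p : ℝ × ℝ | -(ν / d) < p.1 ∧
    0 ≤ c * ξ1 * p.2 + c * ξ2 * p.1 - D * p.2 ^ 2 + chiF μ ν (d * p.1)}

/-- The set G(c) of points (β, α) with c ξ₁ α + c ξ₂ β − d(α² + β²) ≥ λ. -/
def Gset (d lam ξ1 ξ2 c : ℝ) : Set (ℝ × ℝ) :=
  {p : ℝ × ℝ | lam ≤ c * ξ1 * p.2 + c * ξ2 * p.1 - d * (p.2 ^ 2 + p.1 ^ 2)}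

/-- w_*(ξ): the least c > 0 such that S(c) ∩ G(c) ≠ ∅. -/
def wstar (d D μ ν lam ξ1 ξ2 : ℝ) : ℝ :=
  sInf {c : ℝ | 0 < c ∧ (Sset d D μ ν ξ1 ξ2 c ∩ Gset d lam ξ1 ξ2 c).Nonempty}

/-- w_*(θ) := w_*((sin|θ|, cos|θ|)). -/
def wtheta (d D μ ν lam θ : ℝ) : ℝ :=
  wstar d D μ ν lam (Real.sin |θ|) (Real.cos |θ|)

/-- Φ(s) = 2d + D(s² − 1) + 4d²μs/(2νc_K + c_K²s). -/
def PhiF (d D μ ν cK s : ℝ) : ℝ :=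
  2 * d + D * (s ^ 2 - 1) + 4 * d ^ 2 * μ * s / (2 * ν * cK + cK ^ 2 * s)

def Sfun (d D μ ν ξ1 ξ2 c : ℝ) (p : ℝ × ℝ) : ℝ :=
  c * ξ1 * p.2 + c * ξ2 * p.1 - D * p.2 ^ 2 + chiF μ ν (d * p.1)

def Gfun (d ξ1 ξ2 c : ℝ) (p : ℝ × ℝ) : ℝ :=
  c * ξ1 * p.2 + c * ξ2 * p.1 - d * (p.2 ^ 2 + p.1 ^ 2)

def admissibleSpeeds (d D μ ν lam ξ1 ξ2 : ℝ) : Set ℝ :=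
  {c | 0 < c ∧ (Sset d D μ ν ξ1 ξ2 c ∩ Gset d lam ξ1 ξ2 c).Nonempty}

section

variable {d D D' μ ν lam ξ1 ξ2 c : ℝ}

lemma mem_Sset_iff {p : ℝ × ℝ} :
    p ∈ Sset d D μ ν ξ1 ξ2 c ↔ -(ν / d) < p.1 ∧ 0 ≤ Sfun d D μ ν ξ1 ξ2 c p := Iff.rfl

lemma mem_Gset_iff {p : ℝ × ℝ} : p ∈ Gset d lam ξ1 ξ2 c ↔ lam ≤ Gfun d ξ1 ξ2 c p := Iff.rfl

lemma Sfun_sub (η : ℝ) (p : ℝ × ℝ) :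
    Sfun d D μ ν ξ1 ξ2 (c - η) p = Sfun d D μ ν ξ1 ξ2 c p - η * (ξ1 * p.2 + ξ2 * p.1) := by
  unfold Sfun; ring

lemma Gfun_sub (η : ℝ) (p : ℝ × ℝ) :
    Gfun d ξ1 ξ2 (c - η) p = Gfun d ξ1 ξ2 c p - η * (ξ1 * p.2 + ξ2 * p.1) := by
  unfold Gfun; ring

lemma chiF_nonneg (hμ : 0 ≤ μ) (hν : 0 < ν) {s : ℝ} (hs : 0 ≤ s) : 0 ≤ chiF μ ν s :=
  div_nonneg (mul_nonneg hμ hs) (by linarith)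

lemma chiF_concaveOn (hμ : 0 ≤ μ) (hν : 0 ≤ ν) : ConcaveOn ℝ (Ioi (-ν)) (chiF μ ν) := by
  refine ⟨convex_Ioi _, fun x hx y hy a b ha hb hab => ?_⟩
  have hx' : 0 < ν + x := by rw [mem_Ioi] at hx; linarith
  have hy' : 0 < ν + y := by rw [mem_Ioi] at hy; linarith
  obtain rfl : b = 1 - a := by linarith
  have hxy : 0 < a * (ν + x) + (1 - a) * (ν + y) := by
    rcases ha.eq_or_lt with rfl | ha' <;> [simpa; positivity]
  have key : chiF μ ν (a * x + (1 - a) * y) - (a * chiF μ ν x + (1 - a) * chiF μ ν y)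
      = μ * ν * a * (1 - a) * (x - y) ^ 2
        / ((ν + x) * (ν + y) * (a * (ν + x) + (1 - a) * (ν + y))) := by
    unfold chiF
    rw [show ν + (a * x + (1 - a) * y) = a * (ν + x) + (1 - a) * (ν + y) by ring]
    field_simp
    ring
  simp only [smul_eq_mul]
  have : 0 ≤ μ * ν * a * (1 - a) * (x - y) ^ 2
        / ((ν + x) * (ν + y) * (a * (ν + x) + (1 - a) * (ν + y))) := by positivity
  linarith

lemma Sfun_concaveOn (hd : 0 < d) (hD : 0 ≤ D) (hμ : 0 ≤ μ) (hν : 0 ≤ ν) :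
    ConcaveOn ℝ {p : ℝ × ℝ | -(ν / d) < p.1} (Sfun d D μ ν ξ1 ξ2 c) := by
  have hmem {p : ℝ × ℝ} (hp : -(ν / d) < p.1) : d * p.1 ∈ Ioi (-ν) := by
    rw [mem_Ioi, ← neg_div, div_lt_iff₀ hd] at *; linarith
  refine ⟨convex_halfSpace_gt (LinearMap.fst ℝ ℝ ℝ).isLinear _, fun p hp q hq a b ha hb hab => ?_⟩
  have hχ := (chiF_concaveOn hμ hν).2 (hmem hp) (hmem hq) ha hb hab
  simp only [smul_eq_mul] at hχ
  obtain rfl : b = 1 - a := by linarith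
  simp only [Sfun, smul_eq_mul, Prod.fst_add, Prod.snd_add, Prod.smul_fst, Prod.smul_snd]
  rw [show d * (a * p.1 + (1 - a) * q.1) = a * (d * p.1) + (1 - a) * (d * q.1) by ring]
  nlinarith [mul_nonneg (mul_nonneg hD ha) (mul_nonneg hb (sq_nonneg (p.2 - q.2)))]

lemma Gfun_concaveOn (hd : 0 ≤ d) : ConcaveOn ℝ univ (Gfun d ξ1 ξ2 c) := by
  refine ⟨convex_univ, fun p _ q _ a b ha hb hab => ?_⟩
  obtain rfl : b = 1 - a := by linarith
  simp only [Gfun, smul_eq_mul, Prod.fst_add, Prod.snd_add, Prod.smul_fst, Prod.smul_snd]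
  nlinarith [mul_nonneg (mul_nonneg hd ha) (mul_nonneg hb (sq_nonneg (p.2 - q.2))),
    mul_nonneg (mul_nonneg hd ha) (mul_nonneg hb (sq_nonneg (p.1 - q.1)))]

/-- `G(c)` is the closed disc around this point of squared radius `(c² / (4d) - λ) / d`. -/
def Gcenter (d ξ1 ξ2 c : ℝ) : ℝ × ℝ := (c * ξ2 / (2 * d), c * ξ1 / (2 * d))

lemma Gfun_Gcenter (hd : d ≠ 0) (hunit : ξ1 ^ 2 + ξ2 ^ 2 = 1) :
    Gfun d ξ1 ξ2 c (Gcenter d ξ1 ξ2 c) = c ^ 2 / (4 * d) := by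
  have : Gfun d ξ1 ξ2 c (Gcenter d ξ1 ξ2 c) = c ^ 2 * (ξ1 ^ 2 + ξ2 ^ 2) / (4 * d) := by
    simp only [Gfun, Gcenter]
    field_simp
    ring
  rw [this, hunit, mul_one]

lemma neg_le_Sfun_Gcenter (hd : 0 < d) (hD : 0 ≤ D) (hμ : 0 ≤ μ) (hν : 0 < ν)
    (hξ1 : ξ1 ^ 2 ≤ 1) (hξ2 : 0 ≤ ξ2) (hc : 0 ≤ c) :
    -(D * c ^ 2 / (4 * d ^ 2)) ≤ Sfun d D μ ν ξ1 ξ2 c (Gcenter d ξ1 ξ2 c) := by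
  have hχ : 0 ≤ chiF μ ν (d * (c * ξ2 / (2 * d))) := chiF_nonneg hμ hν (by positivity)
  have hlin : 0 ≤ c * ξ1 * (c * ξ1 / (2 * d)) + c * ξ2 * (c * ξ2 / (2 * d)) := by
    rw [show c * ξ1 * (c * ξ1 / (2 * d)) + c * ξ2 * (c * ξ2 / (2 * d))
      = c ^ 2 * (ξ1 ^ 2 + ξ2 ^ 2) / (2 * d) by ring]
    positivity
  have hquad : D * (c * ξ1 / (2 * d)) ^ 2 ≤ D * c ^ 2 / (4 * d ^ 2) := by
    rw [show D * (c * ξ1 / (2 * d)) ^ 2 = D * c ^ 2 * ξ1 ^ 2 / (4 * d ^ 2) by ring]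
    gcongr ?_ / _
    exact mul_le_of_le_one_right (by positivity) hξ1
  simp only [Sfun, Gcenter]
  linarith

lemma neg_div_lt_Gcenter_fst (hd : 0 < d) (hν : 0 < ν) (hξ2 : 0 ≤ ξ2) (hc : 0 ≤ c) :
    -(ν / d) < (Gcenter d ξ1 ξ2 c).1 :=
  (neg_neg_of_pos (div_pos hν hd)).trans_le (by simp only [Gcenter]; positivity)

lemma inner_pos_and_le_of_mem_Gset (hd : 0 < d) (hlam : 0 < lam) (hc : 0 < c)
    (hξ : ξ1 ^ 2 + ξ2 ^ 2 ≤ 1) {p : ℝ × ℝ} (hp : p ∈ Gset d lam ξ1 ξ2 c) :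
    0 < ξ1 * p.2 + ξ2 * p.1 ∧ ξ1 * p.2 + ξ2 * p.1 ≤ c / d := by
  rw [mem_Gset_iff, Gfun] at hp
  have hcs : (ξ1 * p.2 + ξ2 * p.1) ^ 2 ≤ p.2 ^ 2 + p.1 ^ 2 := by
    nlinarith [sq_nonneg (ξ1 * p.1 - ξ2 * p.2), mul_nonneg (sub_nonneg.2 hξ)
      (add_nonneg (sq_nonneg p.1) (sq_nonneg p.2))]
  have hpos : 0 < ξ1 * p.2 + ξ2 * p.1 := by
    nlinarith [mul_nonneg hd.le (add_nonneg (sq_nonneg p.2) (sq_nonneg p.1))]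
  refine ⟨hpos, (le_div_iff₀ hd).2 (le_of_mul_le_mul_right ?_ hpos)⟩
  nlinarith [mul_le_mul_of_nonneg_left hcs hd.le]

lemma sub_mem_admissibleSpeeds (hd : 0 ≤ d) (hlam : 0 < lam) {η : ℝ} {p : ℝ × ℝ}
    (hp : -(ν / d) < p.1) (hpos : 0 < ξ1 * p.2 + ξ2 * p.1)
    (hS : η * (ξ1 * p.2 + ξ2 * p.1) ≤ Sfun d D μ ν ξ1 ξ2 c p)
    (hG : lam + η * (ξ1 * p.2 + ξ2 * p.1) ≤ Gfun d ξ1 ξ2 c p) :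
    c - η ∈ admissibleSpeeds d D μ ν lam ξ1 ξ2 := by
  have hG' : lam ≤ Gfun d ξ1 ξ2 (c - η) p := by rw [Gfun_sub]; linarith
  refine ⟨?_, p, mem_Sset_iff.2 ⟨hp, by rw [Sfun_sub]; linarith⟩, hG'⟩
  refine pos_of_mul_pos_left ?_ hpos.le
  have := mul_nonneg hd (add_nonneg (sq_nonneg p.2) (sq_nonneg p.1))
  simp only [Gfun] at hG'
  linarith

lemma sub_mem_admissibleSpeeds_of_slack (hd : 0 < d) (hD : 0 ≤ D) (hμ : 0 ≤ μ) (hν : 0 < ν)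
    (hlam : 0 < lam) (hξ2 : 0 ≤ ξ2) (hunit : ξ1 ^ 2 + ξ2 ^ 2 = 1) (hc : 0 < c)
    {p : ℝ × ℝ} (hp : -(ν / d) < p.1) {δ : ℝ} (hSp : δ ≤ Sfun d D μ ν ξ1 ξ2 c p)
    (hGp : p ∈ Gset d lam ξ1 ξ2 c) {s κ η : ℝ} (hs0 : 0 ≤ s) (hs1 : s ≤ 1)
    (hs : s * (δ + D * c ^ 2 / (4 * d ^ 2)) ≤ δ / 2) (hκ : lam + κ ≤ c ^ 2 / (4 * d))
    (hη0 : 0 ≤ η) (hηS : η * (c / d) ≤ δ / 2) (hηG : η * (c / d) ≤ s * κ) :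
    c - η ∈ admissibleSpeeds d D μ ν lam ξ1 ξ2 := by
  have hξ1 : ξ1 ^ 2 ≤ 1 := by nlinarith
  have hSq := neg_le_Sfun_Gcenter hd hD hμ hν hξ1 hξ2 hc.le
  have hGq := Gfun_Gcenter (c := c) hd.ne' hunit
  set q := Gcenter d ξ1 ξ2 c
  have hq : -(ν / d) < q.1 := neg_div_lt_Gcenter_fst hd hν hξ2 hc.le
  have hSconc := Sfun_concaveOn (ξ1 := ξ1) (ξ2 := ξ2) (c := c) hd hD hμ hν.le
  have hSr := hSconc.2 hp hq (sub_nonneg.2 hs1) hs0 (sub_add_cancel 1 s)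
  have hGr := (Gfun_concaveOn (ξ1 := ξ1) (ξ2 := ξ2) (c := c) hd.le).2 (mem_univ p) (mem_univ q)
    (sub_nonneg.2 hs1) hs0 (sub_add_cancel 1 s)
  set r := (1 - s) • p + s • q
  have hr : -(ν / d) < r.1 := hSconc.1 hp hq (sub_nonneg.2 hs1) hs0 (sub_add_cancel 1 s)
  rw [mem_Gset_iff] at hGp
  simp only [smul_eq_mul] at hSr hGr
  rw [hGq] at hGr
  have hrS : δ / 2 ≤ Sfun d D μ ν ξ1 ξ2 c r := by
    linarith [mul_le_mul_of_nonneg_left hSp (sub_nonneg.2 hs1), mul_le_mul_of_nonneg_left hSq hs0]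
  have hrG : lam + s * κ ≤ Gfun d ξ1 ξ2 c r := by
    linarith [mul_le_mul_of_nonneg_left hGp (sub_nonneg.2 hs1), mul_le_mul_of_nonneg_left hκ hs0]
  have hsκ : 0 ≤ s * κ := (mul_nonneg hη0 (div_pos hc hd).le).trans hηG
  obtain ⟨hpos, hle⟩ := inner_pos_and_le_of_mem_Gset hd hlam hc hunit.le (p := r)
    (mem_Gset_iff.2 (by linarith))
  have hηr : η * (ξ1 * r.2 + ξ2 * r.1) ≤ η * (c / d) := mul_le_mul_of_nonneg_left hle hη0
  exact sub_mem_admissibleSpeeds hd.le hlam hr hpos (by linarith) (by linarith)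

lemma mul_sub_mul_sq_le_max_abs {m k a a₀ : ℝ} (hm : 0 ≤ m) (hk : 0 ≤ k)
    (hka₀ : 2 * k * a₀ ≤ m) : m * a - k * a ^ 2 ≤ m * max |a| a₀ - k * max |a| a₀ ^ 2 := by
  have habs : m * a - k * a ^ 2 ≤ m * |a| - k * |a| ^ 2 := by
    rw [sq_abs]; linarith [mul_le_mul_of_nonneg_left (le_abs_self a) hm]
  refine habs.trans ?_
  rcases le_total a₀ |a| with h | h
  · rw [max_eq_left h]
  · rw [max_eq_right h]
    nlinarith [mul_nonneg (sub_nonneg.2 h) (mul_nonneg hk (sub_nonneg.2 h))]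

lemma exists_mem_inter_snd_ge (hd : 0 ≤ d) (hD : 0 ≤ D) (hξ1 : 0 ≤ ξ1) (hc : 0 ≤ c)
    {p : ℝ × ℝ} (hp : p ∈ Sset d D μ ν ξ1 ξ2 c ∩ Gset d lam ξ1 ξ2 c) {a₀ : ℝ} (ha₀ : 0 ≤ a₀)
    (ha₀c : 2 * max d D * a₀ ≤ c * ξ1) :
    ∃ p' ∈ Sset d D μ ν ξ1 ξ2 c ∩ Gset d lam ξ1 ξ2 c, a₀ ≤ p'.2 := by
  obtain ⟨⟨hp1, hS⟩, hG⟩ := hp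
  have hm : 0 ≤ c * ξ1 := mul_nonneg hc hξ1
  have hS' := mul_sub_mul_sq_le_max_abs (a := p.2) hm hD
    ((mul_le_mul_of_nonneg_right (by gcongr; exact le_max_right d D) ha₀).trans ha₀c)
  have hG' := mul_sub_mul_sq_le_max_abs (a := p.2) hm hd
    ((mul_le_mul_of_nonneg_right (by gcongr; exact le_max_left d D) ha₀).trans ha₀c)
  refine ⟨(p.1, max |p.2| a₀), ⟨⟨hp1, ?_⟩, ?_⟩, le_max_right _ _⟩
  · dsimp only at hS ⊢; linarith
  · simp only [mem_Gset_iff, Gfun] at hG ⊢; linarith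

lemma Sfun_eq_add (D' : ℝ) (p : ℝ × ℝ) :
    Sfun d D μ ν ξ1 ξ2 c p = Sfun d D' μ ν ξ1 ξ2 c p + (D' - D) * p.2 ^ 2 := by
  unfold Sfun; ring

lemma exists_uniform_sub_mem_admissibleSpeeds (hd : 0 < d) (hμ : 0 ≤ μ) (hν : 0 < ν)
    (hlam : 0 < lam) (hξ1 : 0 < ξ1) (hξ2 : 0 ≤ ξ2) (hunit : ξ1 ^ 2 + ξ2 ^ 2 = 1) (hD : 0 ≤ D)
    (hDD' : D < D') {w : ℝ} (hw : 0 < w) (hwK : 4 * d * lam < w ^ 2) :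
    ∃ η > 0, ∀ c ∈ admissibleSpeeds d D' μ ν lam ξ1 ξ2, w ≤ c → c ≤ w + 1 →
      c - η ∈ admissibleSpeeds d D μ ν lam ξ1 ξ2 := by
  have hK : 0 < max d D' := lt_max_of_lt_left hd
  set a₀ := w * ξ1 / (2 * max d D')
  set δ := (D' - D) * a₀ ^ 2
  set M := D * (w + 1) ^ 2 / (4 * d ^ 2)
  set s := δ / (2 * (δ + M))
  set κ := (w ^ 2 - 4 * d * lam) / (4 * d)
  set m := min (δ / 2) (s * κ)
  have ha₀ : 0 < a₀ := by positivity
  have hδ : 0 < δ := mul_pos (sub_pos.2 hDD') (pow_pos ha₀ 2)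
  have hM : 0 ≤ M := by positivity
  have hs : s * (δ + M) = δ / 2 := by simp only [s]; field_simp
  have hs0 : 0 < s := by positivity
  have hκ : 0 < κ := div_pos (sub_pos.2 hwK) (by positivity)
  have hm : 0 < m := lt_min (half_pos hδ) (mul_pos hs0 hκ)
  refine ⟨m * d / (w + 1), by positivity, fun c ⟨hc, p, hp⟩ hwc hcw => ?_⟩
  obtain ⟨p', ⟨⟨hp'1, hS'⟩, hG'⟩, ha₀p⟩ := exists_mem_inter_snd_ge hd.le (hD.trans hDD'.le)
    hξ1.le hc.le hp ha₀.le (by rw [mul_div_cancel₀ _ (by positivity)]; gcongr)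
  have hSp : δ ≤ Sfun d D μ ν ξ1 ξ2 c p' := by
    rw [Sfun_eq_add D']
    have := mul_le_mul_of_nonneg_left (pow_le_pow_left₀ ha₀.le ha₀p 2) (sub_pos.2 hDD').le
    exact le_add_of_nonneg_of_le hS' this
  have hMc : D * c ^ 2 / (4 * d ^ 2) ≤ M := by simp only [M]; gcongr
  have hηc : m * d / (w + 1) * (c / d) ≤ m := by
    rw [div_mul_div_comm, div_le_iff₀ (by positivity)]
    nlinarith [mul_le_mul_of_nonneg_left hcw (mul_pos hm hd).le]
  refine sub_mem_admissibleSpeeds_of_slack hd hD hμ hν hlam hξ2 hunit hc hp'1 hSp hG' hs0.le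
    ?_ ?_ ?_ (by positivity) (hηc.trans (min_le_left _ _)) (hηc.trans (min_le_right _ _))
  · exact le_of_mul_le_mul_right (by linarith) (by positivity : 0 < δ + M)
  · exact hs ▸ mul_le_mul_of_nonneg_left (by linarith) hs0.le
  · have : lam + κ = w ^ 2 / (4 * d) := by simp only [κ]; field_simp; ring
    rw [this]
    gcongr

lemma four_mul_lt_sq_of_two_mul_sqrt_lt {x w : ℝ} (hx : 0 ≤ x) (h : 2 * √x < w) :
    4 * x < w ^ 2 := by
  have h2 : (2 * √x) ^ 2 = 4 * x := by rw [mul_pow, sq_sqrt hx]; norm_num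
  exact h2 ▸ pow_lt_pow_left₀ h (by positivity) two_ne_zero

lemma bddBelow_admissibleSpeeds : BddBelow (admissibleSpeeds d D μ ν lam ξ1 ξ2) :=
  ⟨0, fun _ hc => hc.1.le⟩

lemma wstar_le_of_mem (hc : c ∈ admissibleSpeeds d D μ ν lam ξ1 ξ2) :
    wstar d D μ ν lam ξ1 ξ2 ≤ c :=
  csInf_le bddBelow_admissibleSpeeds hc

lemma admissibleSpeeds_antitone (hDD' : D ≤ D') :
    admissibleSpeeds d D' μ ν lam ξ1 ξ2 ⊆ admissibleSpeeds d D μ ν lam ξ1 ξ2 := by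
  rintro c ⟨hc, p, ⟨hp1, hS⟩, hG⟩
  refine ⟨hc, p, ⟨hp1, ?_⟩, hG⟩
  nlinarith [sq_nonneg p.2]

lemma admissibleSpeeds_nonempty (hd : 0 < d) (hμ : 0 ≤ μ) (hν : 0 < ν) (hξ2 : 0 ≤ ξ2)
    (hunit : ξ1 ^ 2 + ξ2 ^ 2 = 1) :
    (admissibleSpeeds d D μ ν lam ξ1 ξ2).Nonempty := by
  set c := |D| + d + |lam| + 1
  have hχ : 0 ≤ chiF μ ν (d * ξ2) := chiF_nonneg hμ hν (by positivity)
  have hD : D * ξ1 ^ 2 ≤ |D| := by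
    nlinarith [le_abs_self D, abs_nonneg D, mul_le_mul_of_nonneg_left (sq_nonneg ξ2) (abs_nonneg D)]
  have hlin : c * ξ1 * ξ1 + c * ξ2 * ξ2 = c := by linear_combination c * hunit
  refine ⟨c, by positivity, (ξ2, ξ1), ⟨?_, ?_⟩, ?_⟩
  · exact (neg_neg_of_pos (div_pos hν hd)).trans_le hξ2
  · dsimp only
    linarith [abs_nonneg lam]
  · simp only [mem_Gset_iff, Gfun]
    rw [hlin, hunit]
    linarith [le_abs_self lam, abs_nonneg D]

lemma wstar_mono (hd : 0 < d) (hμ : 0 ≤ μ) (hν : 0 < ν) (hξ2 : 0 ≤ ξ2)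
    (hunit : ξ1 ^ 2 + ξ2 ^ 2 = 1) (hDD' : D ≤ D') :
    wstar d D μ ν lam ξ1 ξ2 ≤ wstar d D' μ ν lam ξ1 ξ2 :=
  csInf_le_csInf bddBelow_admissibleSpeeds (admissibleSpeeds_nonempty hd hμ hν hξ2 hunit)
    (admissibleSpeeds_antitone hDD')

lemma wstar_zero_one_le (hd : 0 < d) (hμ : 0 ≤ μ) (hν : 0 < ν) (hlam : 0 ≤ lam) :
    wstar d D μ ν lam 0 1 ≤ 2 * √(d * lam) := by
  refine le_of_forall_gt_imp_ge_of_dense fun c hc => wstar_le_of_mem ?_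
  have hc0 : 0 < c := (by positivity : 0 ≤ 2 * √(d * lam)).trans_lt hc
  have hcK := four_mul_lt_sq_of_two_mul_sqrt_lt (by positivity) hc
  have hχ : 0 ≤ chiF μ ν (d * (c / (2 * d))) := chiF_nonneg hμ hν (by positivity)
  refine ⟨hc0, (c / (2 * d), 0), ⟨?_, ?_⟩, ?_⟩
  · exact (neg_neg_of_pos (div_pos hν hd)).trans (by positivity)
  · dsimp only
    nlinarith [(by positivity : 0 ≤ c * (c / (2 * d)))]
  · rw [mem_Gset_iff, Gfun]
    dsimp only
    rw [show c * 0 * 0 + c * 1 * (c / (2 * d)) - d * (0 ^ 2 + (c / (2 * d)) ^ 2)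
      = c ^ 2 / (4 * d) by field_simp; ring, le_div_iff₀ (by positivity)]
    linarith

end

theorem statement19
    (d μ ν lam : ℝ) (hd : 0 < d) (hμ : 0 < μ) (hν : 0 < ν) (hlam : 0 < lam)
    (ξ1 ξ2 : ℝ) (hξ1 : 0 ≤ ξ1) (hξ2 : 0 ≤ ξ2) (hunit : ξ1 ^ 2 + ξ2 ^ 2 = 1) :
    (∀ D D' : ℝ, 0 < D → D ≤ D' →
      wstar d D μ ν lam ξ1 ξ2 ≤ wstar d D' μ ν lam ξ1 ξ2) ∧
    (∀ D D' : ℝ, 0 < D → D < D' →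
      2 * Real.sqrt (d * lam) < wstar d D μ ν lam ξ1 ξ2 →
      wstar d D μ ν lam ξ1 ξ2 < wstar d D' μ ν lam ξ1 ξ2) := by
  refine ⟨fun D D' _ hDD' => wstar_mono hd hμ.le hν hξ2 hunit hDD', fun D D' hD hDD' hw => ?_⟩
  have hξ1pos : 0 < ξ1 := by
    refine hξ1.lt_of_ne' fun h0 => hw.not_ge ?_
    obtain rfl : ξ2 = 1 := by subst h0; nlinarith
    exact h0 ▸ wstar_zero_one_le hd hμ.le hν hlam.le
  by_contra! h
  set w := wstar d D μ ν lam ξ1 ξ2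
  have hw0 : 0 < w := (by positivity : 0 ≤ 2 * √(d * lam)).trans_lt hw
  have hwK : 4 * d * lam < w ^ 2 :=
    mul_assoc 4 d lam ▸ four_mul_lt_sq_of_two_mul_sqrt_lt (by positivity) hw
  obtain ⟨η, hη, hdrop⟩ := exists_uniform_sub_mem_admissibleSpeeds hd hμ.le hν hlam hξ1pos hξ2
    hunit hD.le hDD' hw0 hwK
  obtain ⟨c, hc, hcw⟩ := exists_lt_of_csInf_lt (admissibleSpeeds_nonempty hd hμ.le hν hξ2 hunit)
    (h.trans_lt (lt_add_of_pos_right w (lt_min hη one_pos)))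
  have hwc : w ≤ c := wstar_le_of_mem (admissibleSpeeds_antitone hDD'.le hc)
  have hcη : w ≤ c - η := wstar_le_of_mem (hdrop c hc hwc (by linarith [min_le_right η 1]))
  linarith [min_le_left η 1]
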